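/- Let n ≥ 2 and i ∈ [n−1]. The image of the map inv_i on the subgroup D_n of B_n and the image of inv_i on the subgroup F_n of B_n are both exactly the set {0, 1, ..., 2(n−i)+1}. -/

import Mathlib

/-- A signed permutation `π` of `[n]`: `π(i) = ε i · σ(i)` with `σ` a permutation
of `[n]` and signs `ε i ∈ {±1}`.  Positions are encoded by `Fin n`
(position `i ∈ [n]` corresponds to `⟨i-1, _⟩ : Fin n`). -/
structure SignedPerm (n : ℕ) where
  σ : Equiv.Perm (Fin n)
  ε : Fin n → ℤ
  hε : ∀ i, ε i = 1 ∨ ε i = -1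

namespace SignedPerm

variable {n : ℕ}

/-- The signed value `π(i) = ε i · σ(i) ∈ {-n, …, -1, 1, …, n}` (1-based value). -/
def val (π : SignedPerm n) (i : Fin n) : ℤ :=
  π.ε i * ((π.σ i : ℕ) + 1)

/-- The standard basis vector `e i` of `ℝ^n`. -/
def e (i : Fin n) : Fin n → ℝ := Pi.single i 1

/-- The action of a signed permutation on `ℝ^n`, determined by
`π · e i = ε i · e (σ i)`. -/
def act (π : SignedPerm n) (v : Fin n → ℝ) : Fin n → ℝ :=
  fun j => (π.ε (π.σ.symm j) : ℝ) * v (π.σ.symm j)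

/-- The positive root system `Φₙ⁺ = {e k, e i + e j, e i - e j : k, i < j}` of `Bₙ`. -/
def PhiPos (n : ℕ) : Set (Fin n → ℝ) :=
  {v | (∃ k : Fin n, v = e k) ∨ ∃ i j : Fin n, i < j ∧ (v = e i + e j ∨ v = e i - e j)}

/-- The positive roots `Φₙ,ᵢ⁺ = {e i, e i + e j, e i - e j : i < j ≤ n}`. -/
def PhiPosI (n : ℕ) (i : Fin n) : Set (Fin n → ℝ) :=
  {v | v = e i ∨ ∃ j : Fin n, i < j ∧ (v = e i + e j ∨ v = e i - e j)}

/-- The `i`-inversion number `invᵢ π = #{v ∈ Φₙ,ᵢ⁺ : π · v ∈ -Φₙ⁺}`. -/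
noncomputable def invi (i : Fin n) (π : SignedPerm n) : ℕ :=
  Set.ncard {v | v ∈ PhiPosI n i ∧ -(π.act v) ∈ PhiPos n}

/-- The inversion number `inv π = #{v ∈ Φₙ⁺ : π · v ∈ -Φₙ⁺}`. -/
noncomputable def inv (π : SignedPerm n) : ℕ :=
  Set.ncard {v | v ∈ PhiPos n ∧ -(π.act v) ∈ PhiPos n}

end SignedPerm

/-!
Counting the roots `e i` and `e i ± e j` (`j > i`) one at a time shows that `invᵢ π` only
depends on `σ` and `ε i`: with `k` the number of positions after `i` and
`c = #{j > i | σ j < σ i}`, it is `c` if `ε i = 1` and `2k + 1 - c` if `ε i = -1`. This gives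
the upper bound, and transpositions `σ = (i q)` realise every `c ∈ [0, k]`. To land in `Dₙ` or
`Fₙ`, flip the sign at the last position `L ≠ i` if necessary: this does not change `invᵢ`,
and it changes the parity of the number of negative signs as well as that of `inv`, because
the reflection in `e L` permutes the positive roots other than `e L`.
-/

theorem Set.ncard_eq_ncard_sdiff_singleton_add {α : Type*} {s : Set α} (hs : s.Finite) (a : α)
    [Decidable (a ∈ s)] : s.ncard = (s \ {a}).ncard + if a ∈ s then 1 else 0 := by
  split_ifs with h
  · exact (Set.ncard_sdiff_singleton_add_one h hs).symm
  · rw [Set.sdiff_singleton_eq_self h, add_zero]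

namespace SignedPerm

open Finset

variable {n : ℕ}

lemma e_apply (a b : Fin n) : e a b = if b = a then 1 else 0 := Pi.single_apply a 1 b

lemma act_e (π : SignedPerm n) (a : Fin n) : π.act (e a) = (π.ε a : ℝ) • e (π.σ a) := by
  funext j
  simp only [act, e_apply, Pi.smul_apply, smul_eq_mul, Equiv.symm_apply_eq]
  split_ifs with h
  · rw [h, Equiv.symm_apply_apply]
  · simp

lemma act_add (π : SignedPerm n) (u v : Fin n → ℝ) : π.act (u + v) = π.act u + π.act v := by
  funext j
  simp only [act, Pi.add_apply]
  ring

lemma act_sub (π : SignedPerm n) (u v : Fin n → ℝ) : π.act (u - v) = π.act u - π.act v := by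
  funext j
  simp only [act, Pi.sub_apply]
  ring

lemma hε_real (π : SignedPerm n) (a : Fin n) : (π.ε a : ℝ) = 1 ∨ (π.ε a : ℝ) = -1 := by
  exact_mod_cast π.hε a

lemma exists_lead_of_mem_PhiPos {v : Fin n → ℝ} (hv : v ∈ PhiPos n) :
    ∃ k, v k = 1 ∧ ∀ j < k, v j = 0 := by
  rcases hv with ⟨k, rfl⟩ | ⟨a, b, hab, rfl | rfl⟩
  · exact ⟨k, by simp [e_apply], fun j hj => by simp [e_apply, hj.ne]⟩
  all_goals exact ⟨a, by simp [e_apply, hab.ne],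
    fun j hj => by simp [e_apply, hj.ne, (hj.trans hab).ne]⟩

lemma neg_e_notMem_PhiPos (a : Fin n) : -e a ∉ PhiPos n := fun h => by
  obtain ⟨k, hk, -⟩ := exists_lead_of_mem_PhiPos h
  by_cases hka : k = a <;> norm_num [e_apply, hka] at hk

lemma neg_smul_e_mem_PhiPos_iff {x : ℝ} (hx : x = 1 ∨ x = -1) (a : Fin n) :
    -(x • e a) ∈ PhiPos n ↔ x = -1 := by
  rcases hx with rfl | rfl
  · rw [one_smul]
    exact iff_of_false (neg_e_notMem_PhiPos a) (by norm_num)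
  · rw [neg_one_smul, neg_neg]
    exact iff_of_true (Or.inl ⟨a, rfl⟩) rfl

lemma neg_smul_e_add_smul_e_mem_PhiPos_iff {x y : ℝ} (hx : x = 1 ∨ x = -1)
    (hy : y = 1 ∨ y = -1) {a b : Fin n} (hab : a < b) :
    -(x • e a + y • e b) ∈ PhiPos n ↔ x = -1 := by
  rcases hx with rfl | rfl
  · refine ⟨fun h => ?_, fun h => by norm_num at h⟩
    obtain ⟨k, hk, hlt⟩ := exists_lead_of_mem_PhiPos h
    have ha := hlt a
    rcases hy with rfl | rfl <;> by_cases hka : k = a <;> by_cases hkb : k = b <;>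
      simp_all [e_apply, hab.ne, hab.ne']
  · refine ⟨fun _ => rfl, fun _ => Or.inr ⟨a, b, hab, ?_⟩⟩
    rcases hy with rfl | rfl
    · exact Or.inr (by simp; abel)
    · exact Or.inl (by simp [add_comm])

lemma finite_PhiPos (n : ℕ) : (PhiPos n).Finite := by
  refine ((Set.finite_range e).union
    ((Set.finite_range fun p : Fin n × Fin n => e p.1 + e p.2).union
      (Set.finite_range fun p : Fin n × Fin n => e p.1 - e p.2))).subset ?_
  rintro v (⟨k, rfl⟩ | ⟨a, b, -, rfl | rfl⟩)
  · exact Or.inl ⟨k, rfl⟩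
  · exact Or.inr (Or.inl ⟨(a, b), rfl⟩)
  · exact Or.inr (Or.inr ⟨(a, b), rfl⟩)

section Counting

open scoped Classical

lemma neg_act_e_mem_PhiPos_iff (π : SignedPerm n) (a : Fin n) :
    -(π.act (e a)) ∈ PhiPos n ↔ π.ε a = -1 := by
  rw [act_e, neg_smul_e_mem_PhiPos_iff (hε_real π a)]
  exact_mod_cast Iff.rfl

lemma ncard_PhiPosI_sep (i : Fin n) (P : (Fin n → ℝ) → Prop) :
    {v | v ∈ PhiPosI n i ∧ P v}.ncard = (if P (e i) then 1 else 0) +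
      ∑ j ∈ Ioi i, ((if P (e i + e j) then 1 else 0) + (if P (e i - e j) then 1 else 0)) := by
  let pair : Fin n → Finset (Fin n → ℝ) := fun j => {e i + e j, e i - e j}
  have hset : {v | v ∈ PhiPosI n i ∧ P v} = ↑((insert (e i) ((Ioi i).biUnion pair)).filter P) := by
    ext v
    simp [PhiPosI, pair]
  have hpair : ∀ j ∈ Ioi i, e i + e j ≠ e i - e j := fun j hj h => by
    have := congrFun h j
    norm_num [e_apply, (mem_Ioi.1 hj).ne'] at this
  have hdisj : (Ioi i : Set (Fin n)).PairwiseDisjoint pair := by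
    intro j hj j' hj' hjj'
    simp only [pair, Function.onFun, disjoint_insert_left, disjoint_insert_right,
      disjoint_singleton, mem_insert, mem_singleton, not_or]
    have hj := (mem_Ioi.1 hj).ne'
    have hj' := (mem_Ioi.1 hj').ne'
    refine ⟨⟨?_, ?_⟩, ?_, ?_⟩ <;> intro h <;>
      have := congrFun h j <;> norm_num [e_apply, hj, hj', hjj'] at this
  have hei : e i ∉ (Ioi i).biUnion pair := by
    simp only [pair, mem_biUnion, mem_Ioi, mem_insert, mem_singleton, not_exists, not_and]
    intro j hij h
    rcases h with h | h <;> have := congrFun h j <;> norm_num [e_apply, hij.ne'] at this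
  rw [hset, Set.ncard_coe_finset, card_filter, sum_insert hei, sum_biUnion hdisj]
  exact congrArg _ (sum_congr rfl fun j hj => sum_pair (hpair j hj))

lemma ite_neg_act_add_add_ite_neg_act_sub (π : SignedPerm n) {i j : Fin n}
    (hij : i ≠ j) :
    ((if -(π.act (e i + e j)) ∈ PhiPos n then 1 else 0) +
      if -(π.act (e i - e j)) ∈ PhiPos n then 1 else 0) =
      if π.σ j < π.σ i then 1 else if π.ε i = -1 then 2 else 0 := by
  have hadd : π.act (e i + e j) = (π.ε i : ℝ) • e (π.σ i) + (π.ε j : ℝ) • e (π.σ j) := by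
    rw [act_add, act_e, act_e]
  have hsub : π.act (e i - e j) = (π.ε i : ℝ) • e (π.σ i) + (-π.ε j : ℝ) • e (π.σ j) := by
    rw [act_sub, act_e, act_e, neg_smul, sub_eq_add_neg]
  have hj' : (-π.ε j : ℝ) = 1 ∨ (-π.ε j : ℝ) = -1 := by
    rcases hε_real π j with h | h <;> simp [h]
  rw [hadd, hsub]
  rcases lt_or_gt_of_ne (π.σ.injective.ne hij) with hlt | hlt
  · have hcast : (π.ε i : ℝ) = -1 ↔ π.ε i = -1 := by exact_mod_cast Iff.rfl
    rw [neg_smul_e_add_smul_e_mem_PhiPos_iff (hε_real π i) (hε_real π j) hlt,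
      neg_smul_e_add_smul_e_mem_PhiPos_iff (hε_real π i) hj' hlt, if_neg hlt.asymm, hcast]
    split_ifs <;> rfl
  · rw [add_comm ((π.ε i : ℝ) • _), add_comm ((π.ε i : ℝ) • _),
      neg_smul_e_add_smul_e_mem_PhiPos_iff (hε_real π j) (hε_real π i) hlt,
      neg_smul_e_add_smul_e_mem_PhiPos_iff hj' (hε_real π i) hlt, if_pos hlt]
    rcases hε_real π j with h | h <;> norm_num [h]

lemma invi_eq_sum (π : SignedPerm n) (i : Fin n) :
    invi i π = (if π.ε i = -1 then 1 else 0) +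
      ∑ j ∈ Ioi i, if π.σ j < π.σ i then 1 else if π.ε i = -1 then 2 else 0 := by
  rw [invi, ncard_PhiPosI_sep]
  simp only [neg_act_e_mem_PhiPos_iff]
  exact congrArg _ (sum_congr rfl fun j hj =>
    ite_neg_act_add_add_ite_neg_act_sub π (mem_Ioi.1 hj).ne)

end Counting

def permInvi (σ : Equiv.Perm (Fin n)) (i : Fin n) : ℕ := #{j ∈ Ioi i | σ j < σ i}

lemma permInvi_le (σ : Equiv.Perm (Fin n)) (i : Fin n) : permInvi σ i ≤ n - (i.val + 1) := by
  have := card_filter_le (Ioi i) fun j => σ j < σ i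
  rw [Fin.card_Ioi] at this
  unfold permInvi
  omega

lemma invi_eq (π : SignedPerm n) (i : Fin n) :
    invi i π =
      if π.ε i = 1 then permInvi π.σ i else 2 * (n - (i.val + 1)) + 1 - permInvi π.σ i := by
  rw [invi_eq_sum]
  rcases π.hε i with h | h
  · simp [h, permInvi]
  · have hsum : (∑ j ∈ Ioi i, if π.σ j < π.σ i then 1 else 2) + permInvi π.σ i
        = 2 * (n - (i.val + 1)) := by
      rw [permInvi, card_filter, ← sum_add_distrib,
        sum_congr rfl fun j _ => show _ = 2 by split_ifs <;> rfl, sum_const, Fin.card_Ioi,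
        smul_eq_mul]
      omega
    simp only [h, if_true, reduceCtorEq, if_false]
    have := permInvi_le π.σ i
    omega

lemma invi_le (π : SignedPerm n) (i : Fin n) : invi i π ≤ 2 * (n - (i.val + 1)) + 1 := by
  have := permInvi_le π.σ i
  rw [invi_eq]
  split_ifs <;> omega

lemma permInvi_swap (i q : Fin n) : permInvi (Equiv.swap i q) i = q - i := by
  rw [permInvi, ← Fin.card_Ioc]
  congr 1
  ext j
  simp only [mem_filter, mem_Ioi, mem_Ioc, Equiv.swap_apply_left, and_congr_right_iff]
  intro hij
  rcases eq_or_ne j q with rfl | hjq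
  · simp [hij]
  · rw [Equiv.swap_apply_of_ne_of_ne hij.ne' hjq]
    exact ⟨le_of_lt, fun h => lt_of_le_of_ne h hjq⟩

lemma exists_invi_eq {i : Fin n} {m : ℕ} (hm : m ≤ 2 * (n - (i.val + 1)) + 1) :
    ∃ π : SignedPerm n, invi i π = m := by
  by_cases hmk : m ≤ n - (i.val + 1)
  · let q : Fin n := ⟨i + m, by omega⟩
    refine ⟨⟨Equiv.swap i q, fun _ => 1, fun _ => Or.inl rfl⟩, ?_⟩
    rw [invi_eq, if_pos rfl, permInvi_swap]
    simp [q]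
  · let q : Fin n := ⟨i + (2 * (n - (i.val + 1)) + 1 - m), by omega⟩
    refine ⟨⟨Equiv.swap i q, fun _ => -1, fun _ => Or.inr rfl⟩, ?_⟩
    rw [invi_eq, if_neg (by norm_num), permInvi_swap]
    simp [q]
    omega

def negCount (π : SignedPerm n) : ℕ := #{j | π.ε j = -1}

def flipSign (L : Fin n) (π : SignedPerm n) : SignedPerm n where
  σ := π.σ
  ε := Function.update π.ε L (-π.ε L)
  hε j := by
    rcases eq_or_ne j L with rfl | h
    · rcases π.hε j with h | h <;> simp [h]
    · simpa [h] using π.hε j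

lemma invi_flipSign {i L : Fin n} (hiL : i ≠ L) (π : SignedPerm n) :
    invi i (flipSign L π) = invi i π := by
  simp only [invi_eq, flipSign, Function.update_of_ne hiL]

lemma even_negCount_flipSign (L : Fin n) (π : SignedPerm n) :
    Even (negCount (flipSign L π)) ↔ ¬Even (negCount π) := by
  have hsplit (τ : SignedPerm n) : negCount τ =
      (if τ.ε L = -1 then 1 else 0) + ∑ j ∈ univ.erase L, if τ.ε j = -1 then 1 else 0 := by
    rw [negCount, card_filter, ← add_sum_erase _ _ (mem_univ L)]
  have hrest : ∀ j ∈ univ.erase L, (flipSign L π).ε j = π.ε j := fun j hj =>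
    Function.update_of_ne (ne_of_mem_erase hj) _ _
  rw [hsplit, hsplit π, sum_congr rfl fun j hj => by rw [hrest j hj]]
  simp only [flipSign, Function.update_self, neg_eq_iff_eq_neg, neg_neg]
  rcases π.hε L with h | h <;> simp [h, Nat.even_add_one, parity_simps]

def reflect (L : Fin n) (v : Fin n → ℝ) : Fin n → ℝ := Function.update v L (-v L)

lemma reflect_involutive (L : Fin n) : Function.Involutive (reflect L) := fun v => by
  simp [reflect]

lemma act_flipSign (L : Fin n) (π : SignedPerm n) (v : Fin n → ℝ) :
    (flipSign L π).act v = π.act (reflect L v) := by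
  funext j
  simp only [act, flipSign, reflect]
  rcases eq_or_ne (π.σ.symm j) L with h | h
  · simp [h]
  · simp [Function.update_of_ne h]

lemma reflect_e_of_ne {a L : Fin n} (h : a ≠ L) : reflect L (e a) = e a := by
  simp [reflect, e_apply, h.symm]

lemma reflect_e_self (L : Fin n) : reflect L (e L) = -e L := by
  funext j
  rcases eq_or_ne j L with rfl | h <;> simp [reflect, e_apply, *]

lemma reflect_add (L : Fin n) (u v : Fin n → ℝ) :
    reflect L (u + v) = reflect L u + reflect L v := by
  funext j
  rcases eq_or_ne j L with rfl | h <;> simp [reflect, *]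
  ring

lemma reflect_sub (L : Fin n) (u v : Fin n → ℝ) :
    reflect L (u - v) = reflect L u - reflect L v := by
  funext j
  rcases eq_or_ne j L with rfl | h <;> simp [reflect, *]
  ring

lemma reflect_mem_PhiPos {L : Fin n} (hL : ∀ j, j ≤ L) {v : Fin n → ℝ} (hv : v ∈ PhiPos n)
    (hvL : v ≠ e L) : reflect L v ∈ PhiPos n := by
  rcases hv with ⟨k, rfl⟩ | ⟨a, b, hab, rfl | rfl⟩
  · rw [reflect_e_of_ne (by rintro rfl; exact hvL rfl)]
    exact Or.inl ⟨k, rfl⟩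
  all_goals
    have haL : a ≠ L := (hab.trans_le (hL b)).ne
    first | rw [reflect_add] | rw [reflect_sub]
    rw [reflect_e_of_ne haL]
    rcases eq_or_ne b L with rfl | hbL
    · rw [reflect_e_self]
      exact Or.inr ⟨a, b, hab, by simp [sub_eq_add_neg]⟩
    · rw [reflect_e_of_ne hbL]
      exact Or.inr ⟨a, b, hab, by simp⟩

lemma reflect_mem_PhiPos_and_ne_iff {L : Fin n} (hL : ∀ j, j ≤ L) {v : Fin n → ℝ} :
    reflect L v ∈ PhiPos n ∧ reflect L v ≠ e L ↔ v ∈ PhiPos n ∧ v ≠ e L := by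
  have hmaps : ∀ w, w ∈ PhiPos n ∧ w ≠ e L → reflect L w ∈ PhiPos n ∧ reflect L w ≠ e L :=
    fun w ⟨hw, hwL⟩ => ⟨reflect_mem_PhiPos hL hw hwL, fun h => neg_e_notMem_PhiPos L <| by
      rwa [← reflect_e_self, ← h, reflect_involutive]⟩
  exact ⟨fun h => reflect_involutive L v ▸ hmaps _ h, hmaps v⟩

lemma even_inv_flipSign {L : Fin n} (hL : ∀ j, j ≤ L) (π : SignedPerm n) :
    Even (inv (flipSign L π)) ↔ ¬Even (inv π) := by
  classical
  let S := fun τ : SignedPerm n => {v | v ∈ PhiPos n ∧ -(τ.act v) ∈ PhiPos n}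
  have hfin : ∀ τ, (S τ).Finite := fun τ => (finite_PhiPos n).subset fun v hv => hv.1
  have hrest : S (flipSign L π) \ {e L} = reflect L ⁻¹' (S π \ {e L}) := by
    ext v
    simp only [S, Set.mem_sdiff, Set.mem_ofPred_eq, Set.mem_preimage, Set.mem_singleton_iff,
      act_flipSign]
    have := reflect_mem_PhiPos_and_ne_iff hL (v := v)
    tauto
  have hcard : (S (flipSign L π) \ {e L}).ncard = (S π \ {e L}).ncard := by
    rw [hrest, Set.ncard_preimage_of_injective_subset_range (reflect_involutive L).injective
      (by simp [(reflect_involutive L).surjective.range_eq])]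
  have hmem : e L ∈ S (flipSign L π) ↔ e L ∉ S π := by
    have heL : e L ∈ PhiPos n := Or.inl ⟨L, rfl⟩
    simp only [S, Set.mem_ofPred_eq, neg_act_e_mem_PhiPos_iff, flipSign, Function.update_self]
    rcases π.hε L with h | h <;> simp [h, heL]
  change Even (S (flipSign L π)).ncard ↔ ¬Even (S π).ncard
  rw [Set.ncard_eq_ncard_sdiff_singleton_add (hfin _) (e L),
    Set.ncard_eq_ncard_sdiff_singleton_add (hfin π) (e L), hcard]
  by_cases h : e L ∈ S π <;> simp [h, hmem, Nat.even_add_one]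

theorem image_invi_setOf_even (f : SignedPerm n → ℕ) {i L : Fin n} (hiL : i ≠ L)
    (hf : ∀ π, Even (f (flipSign L π)) ↔ ¬Even (f π)) :
    invi i '' {π | Even (f π)} = {m | m ≤ 2 * (n - (i.val + 1)) + 1} := by
  ext m
  refine ⟨fun ⟨π, _, hπ⟩ => hπ ▸ invi_le π i, fun hm => ?_⟩
  obtain ⟨π, hπ⟩ := exists_invi_eq hm
  by_cases h : Even (f π)
  · exact ⟨π, h, hπ⟩
  · exact ⟨flipSign L π, (hf π).2 h, (invi_flipSign hiL π).trans hπ⟩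

end SignedPerm

open SignedPerm in
theorem invi_image_D_F_general (n : ℕ) (i : Fin n) (hi : i.val + 1 ≤ n - 1) :
    (fun π : SignedPerm n => invi i π) ''
        {π : SignedPerm n | Even (Finset.univ.filter fun j : Fin n => π.ε j = -1).card}
      = {m : ℕ | m ≤ 2 * (n - (i.val + 1)) + 1} ∧
    (fun π : SignedPerm n => invi i π) '' {π : SignedPerm n | Even (SignedPerm.inv π)}
      = {m : ℕ | m ≤ 2 * (n - (i.val + 1)) + 1} := by
  let L : Fin n := ⟨n - 1, by omega⟩
  have hL : ∀ j, j ≤ L := fun j => Fin.le_def.2 (by simp only [L]; omega)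
  have hiL : i ≠ L := Fin.ne_of_val_ne (by simp only [L]; omega)
  exact ⟨image_invi_setOf_even negCount hiL (even_negCount_flipSign L),
    image_invi_setOf_even inv hiL (even_inv_flipSign hL)⟩

open SignedPerm in
/-- For `i ∈ [n-1]`, the image of `invᵢ` on the even signed
permutation group `Dₙ ⊆ Bₙ` (an even number of negative signs) and its image on
the signed even permutation group `Fₙ ⊆ Bₙ` (those `π` with `inv π` even) are
both exactly `{0, 1, …, 2(n-i)+1}` (position `i ∈ [n-1]` is `i.val + 1` in
1-based indexing). -/
theorem invi_image_D_F (n : ℕ) (hn : 2 ≤ n) (i : Fin n) (hi : i.val + 1 ≤ n - 1) :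
    (fun π : SignedPerm n => invi i π) ''
        {π : SignedPerm n | Even (Finset.univ.filter fun j : Fin n => π.ε j = -1).card}
      = {m : ℕ | m ≤ 2 * (n - (i.val + 1)) + 1} ∧
    (fun π : SignedPerm n => invi i π) '' {π : SignedPerm n | Even (SignedPerm.inv π)}
      = {m : ℕ | m ≤ 2 * (n - (i.val + 1)) + 1} :=
  invi_image_D_F_general n i hi
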